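/- arXiv:2604.24148 — 2 statements merged into one kernel-verified Lean document; each statement's English description precedes it below -/
import Mathlib

section
/- Let μ be a probability measure on T × T (T a compact metric space) whose two marginals coincide (discrete holonomy). Then for every point (x₀, x₁) ∈ support(μ) there exists a bi-infinite sequence (x_k)_{k ∈ ℤ} with the given x₀, x₁ and (x_k, x_{k+1}) ∈ support(μ) for all k ∈ ℤ. -/
/-!
The support of `μ` is compact and carries full measure, so the support of each marginal is
the image of `supp μ` under the corresponding projection. If `(a, b) ∈ supp μ`, then `b` lies
in the support of the second marginal, which is the first one, so `(b, c) ∈ supp μ` for some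
`c`; symmetrically `(z, a) ∈ supp μ` for some `z`. Iterating both steps gives the chain.
-/

open MeasureTheory

/-- A point `z` belongs to the support of `μ` iff every open neighborhood of `z`
has positive measure. -/
def inSupport {X : Type*} [TopologicalSpace X] [MeasurableSpace X]
    (μ : Measure X) (z : X) : Prop :=
  ∀ U : Set X, IsOpen U → z ∈ U → 0 < μ U

theorem Relation.exists_nat_chain {α : Type*} {R : α → α → Prop}
    (hR : ∀ a b, R a b → ∃ c, R b c) {a b : α} (hab : R a b) :
    ∃ f : ℕ → α, f 0 = a ∧ f 1 = b ∧ ∀ n, R (f n) (f (n + 1)) := by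
  choose! next hnext using hR
  let step (p : {p : α × α // R p.1 p.2}) : {p : α × α // R p.1 p.2} :=
    ⟨(p.1.2, next p.1.1 p.1.2), hnext _ _ p.2⟩
  refine ⟨fun n => (step^[n] ⟨(a, b), hab⟩).1.1, rfl, rfl, fun n => ?_⟩
  simp only [Function.iterate_succ_apply']
  exact (step^[n] _).2

theorem Relation.exists_int_chain {α : Type*} {R : α → α → Prop}
    (hfwd : ∀ a b, R a b → ∃ c, R b c) (hbwd : ∀ a b, R a b → ∃ z, R z a)
    {a b : α} (hab : R a b) :
    ∃ x : ℤ → α, x 0 = a ∧ x 1 = b ∧ ∀ k, R (x k) (x (k + 1)) := by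
  obtain ⟨f, hf0, hf1, hf⟩ := exists_nat_chain hfwd hab
  obtain ⟨g, -, hg1, hg⟩ := exists_nat_chain (R := flip R) (fun a b h => hbwd b a h) hab
  -- `g` runs the chain backwards with `g 0 = b` and `g 1 = a`, hence `x k = g (1 - k)` for `k < 0`.
  refine ⟨fun k => if 0 ≤ k then f k.toNat else g (1 - k).toNat, by simp [hf0],
    by simp [hf1], fun k => ?_⟩
  rcases le_or_gt 0 k with hk | hk
  · have hsucc : (k + 1).toNat = k.toNat + 1 := by omega
    simpa [hk, show 0 ≤ k + 1 by omega, hsucc] using hf k.toNat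
  · have hpred : (1 - k).toNat = (1 - (k + 1)).toNat + 1 := by omega
    have hnext : (if 0 ≤ k + 1 then f (k + 1).toNat else g (1 - (k + 1)).toNat) =
        g (1 - (k + 1)).toNat := by
      split_ifs with h
      · rw [show k + 1 = 0 by omega]; simp [hf0, hg1]
      · rfl
    simp only [not_le.mpr hk, if_false, hnext, hpred]
    exact hg _

lemma inSupport_iff_mem_support {X : Type*} [TopologicalSpace X] [MeasurableSpace X]
    {μ : Measure X} {z : X} : inSupport μ z ↔ z ∈ μ.support := by
  rw [(nhds_basis_opens z).mem_measureSupport]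
  exact forall_congr' fun U => ⟨fun h hU => h hU.2 hU.1, fun h hUo hz => h ⟨hz, hUo⟩⟩

namespace MeasureTheory.Measure

variable {X Y : Type*} [TopologicalSpace X] [MeasurableSpace X]
  [TopologicalSpace Y] [MeasurableSpace Y] {μ : Measure X} {f : X → Y}

lemma image_support_subset_support_map (hf : Continuous f) (hfm : AEMeasurable f μ) :
    f '' μ.support ⊆ (μ.map f).support := by
  rintro _ ⟨x, hx, rfl⟩
  rw [mem_support_iff_forall] at hx ⊢
  exact fun U hU => (hx _ (hf.continuousAt hU)).trans_le (le_map_apply hfm U)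

lemma support_map_subset_image_support [HereditarilyLindelofSpace X] [OpensMeasurableSpace Y]
    (hfm : AEMeasurable f μ) (hclosed : IsClosed (f '' μ.support)) :
    (μ.map f).support ⊆ f '' μ.support := by
  refine support_subset_of_isClosed hclosed ?_
  rw [mem_ae_map_iff hfm hclosed.measurableSet]
  exact Filter.mem_of_superset support_mem_ae (Set.subset_preimage_image f _)

lemma support_map_eq_image_support [CompactSpace X] [HereditarilyLindelofSpace X]
    [T2Space Y] [OpensMeasurableSpace Y] (hf : Continuous f) (hfm : AEMeasurable f μ) :
    (μ.map f).support = f '' μ.support :=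
  (support_map_subset_image_support hfm
    (isClosed_support.isCompact.image hf).isClosed).antisymm
    (image_support_subset_support_map hf hfm)

section EqualMarginals

variable {T : Type*} [TopologicalSpace T] [SecondCountableTopology T] [CompactSpace T]
  [T2Space T] [MeasurableSpace T] [OpensMeasurableSpace T] {μ : Measure (T × T)}

lemma exists_mem_support_succ (hholo : μ.map Prod.fst = μ.map Prod.snd) {a b : T}
    (h : (a, b) ∈ μ.support) : ∃ c, (b, c) ∈ μ.support := by
  have hb : b ∈ (μ.map Prod.snd).support :=
    image_support_subset_support_map continuous_snd measurable_snd.aemeasurable ⟨_, h, rfl⟩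
  rw [← hholo, support_map_eq_image_support continuous_fst measurable_fst.aemeasurable] at hb
  obtain ⟨⟨_, c⟩, hc, rfl⟩ := hb
  exact ⟨c, hc⟩

lemma exists_mem_support_pred (hholo : μ.map Prod.fst = μ.map Prod.snd) {a b : T}
    (h : (a, b) ∈ μ.support) : ∃ z, (z, a) ∈ μ.support := by
  have ha : a ∈ (μ.map Prod.fst).support :=
    image_support_subset_support_map continuous_fst measurable_fst.aemeasurable ⟨_, h, rfl⟩
  rw [hholo, support_map_eq_image_support continuous_snd measurable_snd.aemeasurable] at ha
  obtain ⟨⟨z, _⟩, hz, rfl⟩ := ha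
  exact ⟨z, hz⟩

end EqualMarginals

end MeasureTheory.Measure

theorem stmt8_general {T : Type*} [MetricSpace T] [CompactSpace T]
    [MeasurableSpace T] [BorelSpace T]
    (μ : Measure (T × T))
    (hholo : μ.map Prod.fst = μ.map Prod.snd)
    (x₀ x₁ : T) (hx : inSupport μ (x₀, x₁)) :
    ∃ x : ℤ → T, x 0 = x₀ ∧ x 1 = x₁ ∧
      ∀ k : ℤ, inSupport μ (x k, x (k + 1)) := by
  simp only [inSupport_iff_mem_support] at hx ⊢
  exact Relation.exists_int_chain (fun _ _ => Measure.exists_mem_support_succ hholo)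
    (fun _ _ => Measure.exists_mem_support_pred hholo) hx

/-- Through every point of the support of a probability measure on `T × T` with equal
marginals there passes a bi-infinite chain contained in the support. -/
theorem stmt8 {T : Type*} [MetricSpace T] [CompactSpace T]
    [MeasurableSpace T] [BorelSpace T]
    (μ : Measure (T × T)) [IsProbabilityMeasure μ]
    (hholo : μ.map Prod.fst = μ.map Prod.snd)
    (x₀ x₁ : T) (hx : inSupport μ (x₀, x₁)) :
    ∃ x : ℤ → T, x 0 = x₀ ∧ x 1 = x₁ ∧
      ∀ k : ℤ, inSupport μ (x k, x (k + 1)) :=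
  stmt8_general μ hholo x₀ x₁ hx
end

section
/- Let L : 𝕋ᵈ × ℝᵈ → ℝ be C² with uniformly positive definite Hessian in v on 𝕋ᵈ × B(0,D): hᵀ D²ᵥᵥL(x,v) h ≥ c|h|² for all h ∈ ℝᵈ and (x,v) ∈ 𝕋ᵈ × B(0,D), with c = c(D) > 0. Suppose points x₋₁, x₀, x₁ with velocities v₀ = (x₀ - x₋₁)/τ, v₁ = (x₁ - x₀)/τ, both of norm ≤ D, satisfy the discrete Euler–Lagrange first-order condition D_v L(x₋₁, v₀) + τ D_x L(x₀, v₁) - D_v L(x₀, v₁) = 0. Then |v₁ - v₀| ≤ (τ/c) (D · sup|D²ₓᵥL| + sup|D_xL|), where the suprema are over 𝕋ᵈ × B(0,D). -/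
abbrev Euc (d : ℕ) := EuclideanSpace ℝ (Fin d)

private lemma bxv_scaled (d : ℕ) (F : Euc d × Euc d → ℝ) (D Bxv : ℝ)
    (hBxv : ∀ p : Euc d × Euc d, ‖p.2‖ ≤ D → ∀ a h : Euc d, ‖a‖ ≤ 1 → ‖h‖ ≤ 1 →
      |iteratedFDeriv ℝ 2 F p ![(a, (0 : Euc d)), ((0 : Euc d), h)]| ≤ Bxv)
    (p : Euc d × Euc d) (hp : ‖p.2‖ ≤ D) (a k : Euc d) :
    |iteratedFDeriv ℝ 2 F p ![(a, (0 : Euc d)), ((0 : Euc d), k)]| ≤ Bxv * ‖a‖ * ‖k‖ := by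
  have hBxv0 : 0 ≤ Bxv := by
    have := hBxv p hp 0 0 (by simp) (by simp)
    have h0 : iteratedFDeriv ℝ 2 F p ![((0:Euc d), (0:Euc d)), ((0:Euc d), (0:Euc d))] = 0 := by
      have := (iteratedFDeriv ℝ 2 F p).map_coord_zero (m := ![((0:Euc d), (0:Euc d)), ((0:Euc d), (0:Euc d))]) 0 (by simp [Prod.ext_iff])
      simpa using this
    rw [h0] at this
    simpa using this
  by_cases ha : a = 0
  · have h0 : iteratedFDeriv ℝ 2 F p ![((a:Euc d), (0:Euc d)), ((0:Euc d), k)] = 0 := by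
      apply (iteratedFDeriv ℝ 2 F p).map_coord_zero (m := ![(a, (0:Euc d)), ((0:Euc d), k)]) 0
      simp [ha, Prod.ext_iff]
    rw [h0]
    simp only [abs_zero]
    positivity
  by_cases hk : k = 0
  · have h0 : iteratedFDeriv ℝ 2 F p ![((a:Euc d), (0:Euc d)), ((0:Euc d), k)] = 0 := by
      apply (iteratedFDeriv ℝ 2 F p).map_coord_zero (m := ![(a, (0:Euc d)), ((0:Euc d), k)]) 1
      simp [hk, Prod.ext_iff]
    rw [h0]
    simp only [abs_zero]
    positivity
  · have hna : (0:ℝ) < ‖a‖ := norm_pos_iff.mpr ha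
    have hnk : (0:ℝ) < ‖k‖ := norm_pos_iff.mpr hk
    set a' : Euc d := ‖a‖⁻¹ • a with ha'
    set k' : Euc d := ‖k‖⁻¹ • k with hk'
    have hna' : ‖a'‖ = 1 := by
      rw [ha', norm_smul]; simp [abs_of_pos (inv_pos.mpr hna), inv_mul_cancel₀ hna.ne']
    have hnk' : ‖k'‖ = 1 := by
      rw [hk', norm_smul]; simp [abs_of_pos (inv_pos.mpr hnk), inv_mul_cancel₀ hnk.ne']
    have key : iteratedFDeriv ℝ 2 F p ![(a, (0:Euc d)), ((0:Euc d), k)]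
        = (‖a‖ * ‖k‖) * iteratedFDeriv ℝ 2 F p ![(a', (0:Euc d)), ((0:Euc d), k')] := by
      have heq : (fun i => (![‖a‖, ‖k‖] : Fin 2 → ℝ) i • (![(a', (0:Euc d)), ((0:Euc d), k')] : Fin 2 → Euc d × Euc d) i)
          = ![(a, (0:Euc d)), ((0:Euc d), k)] := by
        funext i
        fin_cases i <;>
          simp [ha', hk', Prod.smul_mk, smul_smul, mul_inv_cancel₀ hna.ne', mul_inv_cancel₀ hnk.ne']
      calc iteratedFDeriv ℝ 2 F p ![(a, (0:Euc d)), ((0:Euc d), k)]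
          = iteratedFDeriv ℝ 2 F p (fun i => (![‖a‖, ‖k‖] : Fin 2 → ℝ) i • (![(a', (0:Euc d)), ((0:Euc d), k')] : Fin 2 → Euc d × Euc d) i) := by rw [heq]
        _ = (∏ i, (![‖a‖, ‖k‖] : Fin 2 → ℝ) i) • iteratedFDeriv ℝ 2 F p ![(a', (0:Euc d)), ((0:Euc d), k')] :=
            (iteratedFDeriv ℝ 2 F p).map_smul_univ _ _
        _ = (‖a‖ * ‖k‖) * iteratedFDeriv ℝ 2 F p ![(a', (0:Euc d)), ((0:Euc d), k')] := by
            simp [Fin.prod_univ_two, smul_eq_mul]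
    rw [key, abs_mul, abs_of_pos (by positivity : (0:ℝ) < ‖a‖ * ‖k‖)]
    have := hBxv p hp a' k' (le_of_eq hna') (le_of_eq hnk')
    calc ‖a‖ * ‖k‖ * |iteratedFDeriv ℝ 2 F p ![(a', (0:Euc d)), ((0:Euc d), k')]|
        ≤ ‖a‖ * ‖k‖ * Bxv := by
          apply mul_le_mul_of_nonneg_left this (by positivity)
      _ = Bxv * ‖a‖ * ‖k‖ := by ring

set_option maxHeartbeats 1000000 in
/-- Step-to-step velocity estimate for discrete calibrated configurations.
`F (x, v) = L(x, v)` is `C²`, strongly convex in `v` on `‖v‖ ≤ D` with constant `c`,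
with mixed second derivative `D²ₓᵥL` bounded by `Bxv` and `DₓL` bounded by `Bx` there.
If consecutive points satisfy the discrete Euler–Lagrange first-order condition, then
`‖v₁ - v₀‖ ≤ (τ/c) (D·Bxv + Bx)`. -/
theorem stmt18 (d : ℕ) (F : Euc d × Euc d → ℝ) (hF : ContDiff ℝ 2 F)
    (D c Bxv Bx : ℝ) (hD : 0 < D) (hc : 0 < c)
    (hconv : ∀ p : Euc d × Euc d, ‖p.2‖ ≤ D → ∀ h : Euc d,
      c * ‖h‖ ^ 2 ≤ iteratedFDeriv ℝ 2 F p ![((0 : Euc d), h), ((0 : Euc d), h)])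
    (hBxv : ∀ p : Euc d × Euc d, ‖p.2‖ ≤ D → ∀ a h : Euc d, ‖a‖ ≤ 1 → ‖h‖ ≤ 1 →
      |iteratedFDeriv ℝ 2 F p ![(a, (0 : Euc d)), ((0 : Euc d), h)]| ≤ Bxv)
    (hBx : ∀ p : Euc d × Euc d, ‖p.2‖ ≤ D → ∀ a : Euc d, ‖a‖ ≤ 1 →
      |fderiv ℝ F p (a, (0 : Euc d))| ≤ Bx)
    (τ : ℝ) (hτ : 0 < τ)
    (xm x₀ x₁ v₀ v₁ : Euc d)
    (hx₀ : x₀ = xm + τ • v₀) (hx₁ : x₁ = x₀ + τ • v₁)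
    (hv₀ : ‖v₀‖ ≤ D) (hv₁ : ‖v₁‖ ≤ D)
    (hEL : ∀ h : Euc d,
      fderiv ℝ F (xm, v₀) ((0 : Euc d), h)
        + τ * fderiv ℝ F (x₀, v₁) (h, (0 : Euc d))
        - fderiv ℝ F (x₀, v₁) ((0 : Euc d), h) = 0) :
    ‖v₁ - v₀‖ ≤ (τ / c) * (D * Bxv + Bx) := by
  have hBxv0 : 0 ≤ Bxv := by
    have := hBxv (xm, v₀) hv₀ 0 0 (by simp) (by simp)
    have h0 : iteratedFDeriv ℝ 2 F (xm, v₀) ![((0:Euc d), (0:Euc d)), ((0:Euc d), (0:Euc d))] = 0 := by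
      have := (iteratedFDeriv ℝ 2 F (xm, v₀)).map_coord_zero
        (m := ![((0:Euc d), (0:Euc d)), ((0:Euc d), (0:Euc d))]) 0 (by simp [Prod.ext_iff])
      simpa using this
    rw [h0] at this; simpa using this
  have hBx0 : 0 ≤ Bx := by
    have := hBx (xm, v₀) hv₀ 0 (by simp)
    have h0 : fderiv ℝ F (xm, v₀) ((0:Euc d), (0:Euc d)) = 0 := by
      have : ((0:Euc d), (0:Euc d)) = (0 : Euc d × Euc d) := by simp [Prod.ext_iff]
      rw [this, map_zero]
    rw [h0] at this; simpa using this
  set h : Euc d := v₁ - v₀ with hhdef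
  by_cases hh0 : h = 0
  · rw [hh0, norm_zero]
    positivity
  have hhpos : (0:ℝ) < ‖h‖ := norm_pos_iff.mpr hh0
  -- the path
  set w : Euc d × Euc d := (τ • v₀, h) with hw
  set γ : ℝ → Euc d × Euc d := fun t => (xm, v₀) + t • w with hγdef
  have hγ : ∀ t : ℝ, HasDerivAt γ w t := by
    intro t
    have h1 : HasDerivAt (fun t : ℝ => t • w) ((1:ℝ) • w) t :=
      (hasDerivAt_id t).smul_const w
    simpa [hγdef] using h1.const_add (xm, v₀)
  have hγ0 : γ 0 = (xm, v₀) := by simp [hγdef]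
  have hγ1 : γ 1 = (x₀, v₁) := by
    simp only [hγdef, one_smul, hw, Prod.mk_add_mk, Prod.ext_iff]
    constructor
    · rw [hx₀]
    · simp [hhdef]
  have hγ2 : ∀ t ∈ Set.Icc (0:ℝ) 1, ‖(γ t).2‖ ≤ D := by
    intro t ht
    have : (γ t).2 = (1 - t) • v₀ + t • v₁ := by
      simp only [hγdef, hw, Prod.snd_add, Prod.smul_mk, hhdef]
      rw [smul_sub, sub_smul, one_smul]
      abel
    rw [this]
    calc ‖(1 - t) • v₀ + t • v₁‖ ≤ ‖(1-t) • v₀‖ + ‖t • v₁‖ := norm_add_le _ _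
      _ = (1-t) * ‖v₀‖ + t * ‖v₁‖ := by
          rw [norm_smul, norm_smul, Real.norm_eq_abs, Real.norm_eq_abs,
            abs_of_nonneg (by linarith [ht.2] : (0:ℝ) ≤ 1 - t), abs_of_nonneg ht.1]
      _ ≤ (1-t) * D + t * D := by
          have h1 : (0:ℝ) ≤ 1 - t := by linarith [ht.2]
          have h2 := ht.1
          gcongr
      _ = D := by ring
  -- derivative setup
  set Φ : Euc d × Euc d → (Euc d × Euc d) →L[ℝ] ℝ := fderiv ℝ F with hΦ
  set A : Euc d × Euc d → (Euc d × Euc d) →L[ℝ] (Euc d × Euc d) →L[ℝ] ℝ := fderiv ℝ Φ with hA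
  have hΦdiff : Differentiable ℝ Φ := by
    have : ContDiff ℝ 1 Φ := hF.fderiv_right (by norm_num)
    exact this.differentiable (by norm_num)
  set g : ℝ → ℝ := fun t => Φ (γ t) (0, h) with hg
  have hg' : ∀ t : ℝ, HasDerivAt g (A (γ t) w ((0:Euc d), h)) t := by
    intro t
    have h1 : HasDerivAt (fun s => Φ (γ s)) (A (γ t) w) t :=
      HasFDerivAt.comp_hasDerivAt t (hΦdiff (γ t)).hasFDerivAt (hγ t)
    have h2 := h1.clm_apply (hasDerivAt_const t ((0:Euc d), h))
    simpa using h2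
  -- mean value theorem
  obtain ⟨t, ht, hmvt⟩ := exists_hasDerivAt_eq_slope g (fun t => A (γ t) w ((0:Euc d), h))
    (by norm_num : (0:ℝ) < 1)
    (fun t _ => (hg' t).differentiableAt.continuousAt.continuousWithinAt)
    (fun t _ => hg' t)
  have hslope : A (γ t) w ((0:Euc d), h) = g 1 - g 0 := by
    rw [hmvt]; norm_num
  -- relate iterated derivs to A
  have hiter : ∀ p : Euc d × Euc d, ∀ u v : Euc d × Euc d,
      iteratedFDeriv ℝ 2 F p ![u, v] = A p u v := by
    intro p u v
    rw [iteratedFDeriv_two_apply]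
    simp [hA, hΦ]
  have htD : ‖(γ t).2‖ ≤ D := hγ2 t ⟨le_of_lt ht.1, le_of_lt ht.2⟩
  -- split the bilinear term
  have hsplit : A (γ t) w ((0:Euc d), h)
      = A (γ t) (τ • v₀, (0:Euc d)) ((0:Euc d), h) + A (γ t) ((0:Euc d), h) ((0:Euc d), h) := by
    have : w = (τ • v₀, (0:Euc d)) + ((0:Euc d), h) := by simp [hw, Prod.ext_iff]
    rw [this, map_add, ContinuousLinearMap.add_apply]
  -- bounds
  have hconv' : c * ‖h‖ ^ 2 ≤ A (γ t) ((0:Euc d), h) ((0:Euc d), h) := by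
    rw [← hiter]; exact hconv (γ t) htD h
  have hmix : |A (γ t) (τ • v₀, (0:Euc d)) ((0:Euc d), h)| ≤ Bxv * (τ * D) * ‖h‖ := by
    rw [← hiter]
    calc |iteratedFDeriv ℝ 2 F (γ t) ![(τ • v₀, (0:Euc d)), ((0:Euc d), h)]|
        ≤ Bxv * ‖τ • v₀‖ * ‖h‖ := bxv_scaled d F D Bxv hBxv (γ t) htD (τ • v₀) h
      _ ≤ Bxv * (τ * D) * ‖h‖ := by
          have : ‖τ • v₀‖ = τ * ‖v₀‖ := by
            rw [norm_smul, Real.norm_eq_abs, abs_of_pos hτ]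
          rw [this]
          have : τ * ‖v₀‖ ≤ τ * D := by gcongr
          gcongr
  -- compute g 1 - g 0 using EL
  have hg10 : g 1 - g 0 = τ * Φ (x₀, v₁) (h, (0:Euc d)) := by
    simp only [hg, hγ0, hγ1]
    have := hEL h
    rw [hΦ]
    linarith [hEL h]
  have hBx' : |Φ (x₀, v₁) (h, (0:Euc d))| ≤ Bx * ‖h‖ := by
    have hh' : ‖(‖h‖⁻¹ • h : Euc d)‖ = 1 := by
      rw [norm_smul, Real.norm_eq_abs, abs_of_pos (inv_pos.mpr hhpos), inv_mul_cancel₀ hhpos.ne']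
    have hb := hBx (x₀, v₁) hv₁ (‖h‖⁻¹ • h) (le_of_eq hh')
    have hsc : Φ (x₀, v₁) (h, (0:Euc d)) = ‖h‖ * fderiv ℝ F (x₀, v₁) (‖h‖⁻¹ • h, (0:Euc d)) := by
      rw [hΦ]
      have : ((h : Euc d), (0:Euc d)) = ‖h‖ • ((‖h‖⁻¹ • h : Euc d), (0:Euc d)) := by
        simp [Prod.ext_iff, smul_smul, mul_inv_cancel₀ hhpos.ne']
      rw [this, map_smul, smul_eq_mul]
    rw [hsc, abs_mul, abs_of_pos hhpos]
    calc ‖h‖ * |fderiv ℝ F (x₀, v₁) (‖h‖⁻¹ • h, (0:Euc d))| ≤ ‖h‖ * Bx := by gcongr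
      _ = Bx * ‖h‖ := mul_comm _ _
  -- combine
  have key : c * ‖h‖ ^ 2 ≤ τ * Bx * ‖h‖ + Bxv * (τ * D) * ‖h‖ := by
    have h1 : A (γ t) ((0:Euc d), h) ((0:Euc d), h)
        = (g 1 - g 0) - A (γ t) (τ • v₀, (0:Euc d)) ((0:Euc d), h) := by
      rw [← hslope, hsplit]; ring
    have h2 : τ * Φ (x₀, v₁) (h, (0:Euc d)) ≤ τ * (Bx * ‖h‖) := by
      have := (abs_le.mp hBx').2
      nlinarith
    have h3 := (abs_le.mp hmix).1
    calc c * ‖h‖ ^ 2 ≤ A (γ t) ((0:Euc d), h) ((0:Euc d), h) := hconv'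
      _ = (g 1 - g 0) - A (γ t) (τ • v₀, (0:Euc d)) ((0:Euc d), h) := h1
      _ ≤ τ * (Bx * ‖h‖) + Bxv * (τ * D) * ‖h‖ := by
          rw [hg10]; linarith
      _ = τ * Bx * ‖h‖ + Bxv * (τ * D) * ‖h‖ := by ring
  have hfinal : ‖h‖ ≤ (τ / c) * (D * Bxv + Bx) := by
    rw [div_mul_eq_mul_div, le_div_iff₀ hc]
    nlinarith [key, hhpos]
  simpa [hhdef] using hfinal
end
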